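/- arXiv:1511.07230 — 6 statements merged into one kernel-verified Lean document; each statement's English description precedes it below -/
import Mathlib

section
/- Let F : ℝ≥0 → ℝ be Lipschitz and convex with right derivative F' and Stieltjes measure F''. Let γ : (0,∞) → ℝ be an absolutely continuous nondecreasing function with γ(0+)=0. Then for every l > 0, ∫₀^l γ'(z) e^{γ(z)} (∫_{(z,l]} e^{-γ(m)} F''(dm)) dz = F'(l) − F'(0) − ∫_{(0,l]} e^{-γ(m)} F''(dm). -/
open MeasureTheory Set Filter
open scoped Interval

/-! Write `Γ z = ∫₀^z γ'`, so that `γ = Γ` on `(0, ∞)`. The left-hand side is the integral of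
`γ'(z) e^{Γ z - Γ m}` over the triangle `0 < z < m ≤ l` against `dz ⊗ F''(dm)`. Since `e^{-Γ}` is
bounded on `[0, l]` and `F''` is finite there, Fubini lets us integrate in `z` first, and
`∫₀^m γ' e^Γ = e^{Γ m} - 1` by the fundamental theorem of calculus for the absolutely continuous
function `e^Γ`. What remains is `∫_{(0,l]} (1 - e^{-Γ m}) F''(dm)`. -/

theorem LipschitzOnWith.comp_absolutelyContinuousOnInterval {X Y : Type*}
    [PseudoMetricSpace X] [PseudoMetricSpace Y] {φ : X → Y} {f : ℝ → X} {K : NNReal}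
    {s : Set X} {a b : ℝ} (hφ : LipschitzOnWith K φ s) (hf : AbsolutelyContinuousOnInterval f a b)
    (hfs : MapsTo f (uIcc a b) s) : AbsolutelyContinuousOnInterval (φ ∘ f) a b := by
  rw [absolutelyContinuousOnInterval_iff] at hf ⊢
  intro ε hε
  obtain ⟨δ, hδ, hfδ⟩ := hf (ε / (K + 1)) (by positivity)
  refine ⟨δ, hδ, fun E hE hEδ => ?_⟩
  calc ∑ i ∈ Finset.range E.1, dist (φ (f (E.2 i).1)) (φ (f (E.2 i).2))
      ≤ ∑ i ∈ Finset.range E.1, K * dist (f (E.2 i).1) (f (E.2 i).2) :=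
        Finset.sum_le_sum fun i hi =>
          hφ.dist_le_mul _ (hfs (hE.1 i hi).1) _ (hfs (hE.1 i hi).2)
    _ = K * ∑ i ∈ Finset.range E.1, dist (f (E.2 i).1) (f (E.2 i).2) := by
        rw [Finset.mul_sum]
    _ ≤ K * (ε / (K + 1)) := by gcongr; exact (hfδ E hE hEδ).le
    _ < ε := by
        rw [mul_div_assoc', div_lt_iff₀ (by positivity)]
        nlinarith

theorem LocallyLipschitz.comp_absolutelyContinuousOnInterval {E Y : Type*}
    [SeminormedAddCommGroup E] [PseudoMetricSpace Y] {φ : E → Y} {f : ℝ → E} {a b : ℝ}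
    (hφ : LocallyLipschitz φ) (hf : AbsolutelyContinuousOnInterval f a b) :
    AbsolutelyContinuousOnInterval (φ ∘ f) a b := by
  obtain ⟨K, hK⟩ := (hφ.locallyLipschitzOn (s := f '' uIcc a b)).exists_lipschitzOnWith_of_compact
    (isCompact_uIcc.image_of_continuousOn hf.continuousOn)
  exact hK.comp_absolutelyContinuousOnInterval hf (mapsTo_image f _)

theorem intervalIntegral.integral_mul_exp_integral {g : ℝ → ℝ} {a b : ℝ}
    (hg : IntervalIntegrable g volume a b) :
    ∫ x in a..b, g x * Real.exp (∫ t in a..x, g t) = Real.exp (∫ t in a..b, g t) - 1 := by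
  set P : ℝ → ℝ := fun x => ∫ t in a..x, g t
  have hP : AbsolutelyContinuousOnInterval P a b :=
    hg.absolutelyContinuousOnInterval_intervalIntegral (by simp)
  have hexpP := Real.contDiff_exp.locallyLipschitz.comp_absolutelyContinuousOnInterval hP
  have hderiv : ∀ᵐ x, x ∈ Ι a b → deriv (Real.exp ∘ P) x = g x * Real.exp (P x) := by
    filter_upwards [hg.ae_hasDerivAt_integral] with x hx hxab
    exact ((hx (uIoc_subset_uIcc hxab) a (by simp)).exp.deriv).trans (mul_comm _ _)
  rw [← intervalIntegral.integral_congr_ae hderiv, hexpP.integral_deriv_eq_sub]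
  simp [P]

theorem setIntegral_mul_setIntegral_Ioc_swap {μ ν : Measure ℝ} [SFinite μ] [SFinite ν]
    {f h : ℝ → ℝ} {a b : ℝ} (hf : IntegrableOn f (Ioc a b) μ) (hh : IntegrableOn h (Ioc a b) ν) :
    ∫ z in Ioc a b, f z * ∫ m in Ioc z b, h m ∂ν ∂μ
      = ∫ m in Ioc a b, h m * ∫ z in Ioo a m, f z ∂μ ∂ν := by
  set H : ℝ × ℝ → ℝ := {p | p.1 < p.2}.indicator fun p => f p.1 * h p.2
  have hH : Integrable H ((μ.restrict (Ioc a b)).prod (ν.restrict (Ioc a b))) :=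
    (hf.mul_prod hh).indicator (measurableSet_lt measurable_fst measurable_snd)
  have hslice₁ : ∀ z ∈ Ioc a b, ∫ m in Ioc a b, H (z, m) ∂ν = f z * ∫ m in Ioc z b, h m ∂ν := by
    intro z hz
    have hHz : (fun m => H (z, m)) = (Ioi z).indicator fun m => f z * h m := by
      ext m; by_cases hm : z < m <;> simp [H, indicator, hm]
    rw [hHz, integral_indicator measurableSet_Ioi, Measure.restrict_restrict measurableSet_Ioi,
      inter_comm, Ioc_inter_Ioi, sup_eq_right.2 hz.1.le, integral_const_mul]
  have hslice₂ : ∀ m ∈ Ioc a b, ∫ z in Ioc a b, H (z, m) ∂μ = h m * ∫ z in Ioo a m, f z ∂μ := by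
    intro m hm
    have hHm : (fun z => H (z, m)) = (Iio m).indicator fun z => h m * f z := by
      ext z; by_cases hz : z < m <;> simp [H, indicator, hz, mul_comm]
    rw [hHm, integral_indicator measurableSet_Iio, Measure.restrict_restrict measurableSet_Iio,
      show Iio m ∩ Ioc a b = Ioo a m by grind, integral_const_mul]
  calc ∫ z in Ioc a b, f z * ∫ m in Ioc z b, h m ∂ν ∂μ
      = ∫ z in Ioc a b, ∫ m in Ioc a b, H (z, m) ∂ν ∂μ :=
        setIntegral_congr_fun measurableSet_Ioc fun z hz => (hslice₁ z hz).symm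
    _ = ∫ m in Ioc a b, ∫ z in Ioc a b, H (z, m) ∂μ ∂ν := integral_integral_swap hH
    _ = ∫ m in Ioc a b, h m * ∫ z in Ioo a m, f z ∂μ ∂ν :=
        setIntegral_congr_fun measurableSet_Ioc hslice₂

theorem setIntegral_mul_exp_mul_setIntegral_exp_neg (ν : Measure ℝ) [IsLocallyFiniteMeasure ν]
    {g : ℝ → ℝ} {a b : ℝ} (hg : IntegrableOn g (Ioc a b)) :
    ∫ z in Ioc a b, g z * Real.exp (∫ t in a..z, g t) *
        ∫ m in Ioc z b, Real.exp (-∫ t in a..m, g t) ∂ν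
      = ν.real (Ioc a b) - ∫ m in Ioc a b, Real.exp (-∫ t in a..m, g t) ∂ν := by
  rcases le_or_gt b a with hba | hab
  · simp [Ioc_eq_empty_of_le hba]
  set P : ℝ → ℝ := fun x => ∫ t in a..x, g t
  have hg' : IntervalIntegrable g volume a b :=
    (intervalIntegrable_iff_integrableOn_Ioc_of_le hab.le).2 hg
  have hPc : ContinuousOn P (Icc a b) := by
    simpa [uIcc_of_le hab.le] using
      (hg'.absolutelyContinuousOnInterval_intervalIntegral (c := a) (by simp)).continuousOn
  have hexpP : ∀ m ∈ Ioc a b, ∫ z in Ioo a m, g z * Real.exp (P z) = Real.exp (P m) - 1 := by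
    intro m hm
    rw [← integral_Ioc_eq_integral_Ioo, ← intervalIntegral.integral_of_le hm.1.le]
    exact intervalIntegral.integral_mul_exp_integral (hg'.mono_set (by
      rw [uIcc_of_le hab.le, uIcc_of_le hm.1.le]; exact Icc_subset_Icc_right hm.2))
  have hgexpP : IntegrableOn (fun z => g z * Real.exp (P z)) (Ioc a b) :=
    hg.mul_continuousOn_of_subset (Real.continuous_exp.comp_continuousOn hPc) measurableSet_Ioc
      isCompact_Icc Ioc_subset_Icc_self
  have hexpNegP : IntegrableOn (fun m => Real.exp (-P m)) (Ioc a b) ν :=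
    ((Real.continuous_exp.comp_continuousOn hPc.neg).integrableOn_compact isCompact_Icc).mono_set
      Ioc_subset_Icc_self
  calc _ = ∫ m in Ioc a b, (1 - Real.exp (-P m)) ∂ν :=
        (setIntegral_mul_setIntegral_Ioc_swap hgexpP hexpNegP).trans
          (setIntegral_congr_fun measurableSet_Ioc fun m hm => by
            simp only [hexpP m hm, mul_sub, ← Real.exp_add, neg_add_cancel, Real.exp_zero, mul_one])
    _ = _ := by
        have hone : IntegrableOn (fun _ => (1 : ℝ)) (Ioc a b) ν :=
          integrableOn_const measure_Ioc_lt_top.ne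
        rw [integral_sub hone hexpNegP, setIntegral_const, smul_eq_mul, mul_one]

theorem stmt0_general (F' : StieltjesFunction ℝ)
    (γ γ' : ℝ → ℝ)
    (hγ'int : IntegrableOn γ' (Set.Ioi 0))
    (hγ : ∀ l : ℝ, 0 < l → γ l = ∫ z in (0:ℝ)..l, γ' z)
    (l : ℝ) (hl : 0 < l) :
    ∫ z in (0:ℝ)..l,
        γ' z * Real.exp (γ z) * (∫ m in Set.Ioc z l, Real.exp (-γ m) ∂F'.measure)
      = F' l - F' 0 - ∫ m in Set.Ioc 0 l, Real.exp (-γ m) ∂F'.measure := by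
  have hexpγ : ∀ z, 0 ≤ z → ∫ m in Ioc z l, Real.exp (-γ m) ∂F'.measure
      = ∫ m in Ioc z l, Real.exp (-∫ t in (0:ℝ)..m, γ' t) ∂F'.measure := fun z hz =>
    setIntegral_congr_fun measurableSet_Ioc fun m hm => by rw [hγ m (hz.trans_lt hm.1)]
  have hFl : F'.measure.real (Ioc 0 l) = F' l - F' 0 := by
    rw [measureReal_def, F'.measure_Ioc, ENNReal.toReal_ofReal (sub_nonneg.2 (F'.mono hl.le))]
  rw [intervalIntegral.integral_of_le hl.le, hexpγ 0 le_rfl, ← hFl,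
    ← setIntegral_mul_exp_mul_setIntegral_exp_neg F'.measure (hγ'int.mono_set Ioc_subset_Ioi_self)]
  refine setIntegral_congr_fun measurableSet_Ioc fun z hz => ?_
  rw [hexpγ z hz.1.le, hγ z hz.1]

/-- Fubini identity for the convex function `F`, its right derivative `F'`
(a Stieltjes function whose associated measure is `F''`), and an absolutely
continuous nondecreasing `γ` on `(0,∞)` with `γ(0+)=0`. -/
theorem stmt0 (F : ℝ → ℝ) (F' : StieltjesFunction ℝ)
    (K : NNReal) (hLip : LipschitzWith K F)
    (hconv : ConvexOn ℝ (Set.Ici 0) F)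
    (hF' : ∀ x : ℝ, 0 ≤ x → HasDerivWithinAt F (F' x) (Set.Ioi x) x)
    (γ γ' : ℝ → ℝ)
    (hγmono : MonotoneOn γ (Set.Ioi 0))
    (hγ'int : IntegrableOn γ' (Set.Ioi 0))
    (hγ : ∀ l : ℝ, 0 < l → γ l = ∫ z in (0:ℝ)..l, γ' z)
    (hγ0 : Tendsto γ (nhdsWithin 0 (Set.Ioi 0)) (nhds 0))
    (l : ℝ) (hl : 0 < l) :
    ∫ z in (0:ℝ)..l,
        γ' z * Real.exp (γ z) * (∫ m in Set.Ioc z l, Real.exp (-γ m) ∂F'.measure)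
      = F' l - F' 0 - ∫ m in Set.Ioc 0 l, Real.exp (-γ m) ∂F'.measure :=
  stmt0_general F' γ γ' hγ'int hγ l hl
end

section
/- Let F : ℝ≥0 → ℝ be Lipschitz convex, φ₊ : (0,∞) → (0,∞) nondecreasing right-continuous, φ₋ : (0,∞) → (−∞,0) nonincreasing right-continuous, and γ(l) := (1/2)∫₀^l (1/φ₊(m) − 1/φ₋(m)) dm with γ(0+)=0 and γ(∞)=∞. Define A±(l) := A±(0) + ∫₀^l (e^{γ(z)}/φ±(z)) (∫_{(z,∞)} e^{-γ(m)} F''(dm)) dz with A±(0) := ±F'(0) ± ∫_{(0,∞)} e^{-γ(m)} F''(dm). Then for all l > 0: (1/2)(A₊(l) − A₋(l)) = F'(l) + e^{γ(l)} ∫_{(l,∞)} e^{-γ(m)} F''(dm). -/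
/-!
Put `h = (1/φ₊ - 1/φ₋)/2 ≥ 0`, so that `γ` is a primitive of `h`, and
`G z = ∫_{(z,∞)} e^{-γ} dF''`. Then `(A₊ - A₋)(l)/2 = F'(0) + G(0) + ∫₀^l h e^γ G`, and the
last integral is computed by integration by parts for `d(e^γ G) = h e^γ G dz - dF''`:
by Fubini it equals `∫_{(0,∞)} e^{-γ m} (e^{γ (min m l)} - 1) F''(dm)`, because
`∫₀^c h e^γ = e^{γ c} - 1`, and this is `F'(l) - F'(0) + e^{γ l} G(l) - G(0)`.
All integrals are finite: `F'` is bounded by the Lipschitz constant, so `F''` is finite on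
`(0,∞)` and `0 < e^{-γ} ≤ 1` there; `h` is integrable near `0` because `γ → ∞`; and
`h`, being antitone, is continuous off a countable set, which is enough for the chain rule.
-/

open MeasureTheory Set Filter

theorem setIntegral_Ioi_eq_setIntegral_Ioc_add {μ : Measure ℝ} {f : ℝ → ℝ} {a b : ℝ}
    (hab : a ≤ b) (hf : IntegrableOn f (Ioi a) μ) :
    ∫ x in Ioi a, f x ∂μ = ∫ x in Ioc a b, f x ∂μ + ∫ x in Ioi b, f x ∂μ := by
  rw [← Ioc_union_Ioi_eq_Ioi hab, setIntegral_union Ioc_disjoint_Ioi_same measurableSet_Ioi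
    (hf.mono_set Ioc_subset_Ioi_self) (hf.mono_set (Ioi_subset_Ioi hab))]

theorem antitoneOn_setIntegral_Ioi {μ : Measure ℝ} {g : ℝ → ℝ} {a : ℝ}
    (hg : IntegrableOn g (Ioi a) μ) (hg_nonneg : ∀ x, a < x → 0 ≤ g x) :
    AntitoneOn (fun z => ∫ m in Ioi z, g m ∂μ) (Ici a) := by
  intro x hx y hy hxy
  dsimp only
  rw [setIntegral_Ioi_eq_setIntegral_Ioc_add hxy (hg.mono_set (Ioi_subset_Ioi hx)),
    le_add_iff_nonneg_left]
  exact setIntegral_nonneg measurableSet_Ioc fun m hm => hg_nonneg m (lt_of_le_of_lt hx hm.1)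

theorem setIntegral_Ioc_mul_setIntegral_Ioi {μ : Measure ℝ} [SFinite μ] {w g : ℝ → ℝ}
    {a l : ℝ} (hal : a ≤ l) (hw : IntegrableOn w (Ioc a l)) (hg : IntegrableOn g (Ioi a) μ) :
    ∫ z in Ioc a l, w z * ∫ m in Ioi z, g m ∂μ
      = ∫ m in Ioi a, g m * (∫ z in a..min m l, w z) ∂μ := by
  set P : ℝ → ℝ → ℝ := fun z m => if z < m then w z * g m else 0
  have hP : Integrable (Function.uncurry P)
      ((volume.restrict (Ioc a l)).prod (μ.restrict (Ioi a))) :=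
    ((hw.mul_prod hg).indicator (measurableSet_lt measurable_fst measurable_snd)).congr
      (.of_forall fun p => by simp [P, Set.indicator_apply, Function.uncurry])
  calc ∫ z in Ioc a l, w z * ∫ m in Ioi z, g m ∂μ
      = ∫ z in Ioc a l, ∫ m in Ioi a, P z m ∂μ := by
        refine setIntegral_congr_fun measurableSet_Ioc fun z hz => ?_
        have hP : P z = fun m => w z * (Ioi z).indicator g m := by
          ext m; simp [P, Set.indicator_apply]
        rw [hP, integral_const_mul, setIntegral_indicator measurableSet_Ioi, Ioi_inter_Ioi,
          max_eq_right hz.1.le]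
    _ = ∫ m in Ioi a, (∫ z in Ioc a l, P z m) ∂μ := by exact integral_integral_swap hP
    _ = ∫ m in Ioi a, g m * (∫ z in a..min m l, w z) ∂μ := by
        refine setIntegral_congr_fun measurableSet_Ioi fun m hm => ?_
        have hP : (P · m) = fun z => (Iio m).indicator w z * g m := by
          ext z; simp [P, Set.indicator_apply]
        rw [hP, integral_mul_const, setIntegral_indicator measurableSet_Iio,
          setIntegral_congr_set ((ae_eq_refl _).inter (Iio_ae_eq_Iic (μ := volume))),
          Ioc_inter_Iic, intervalIntegral.integral_of_le (le_min (le_of_lt hm) hal), min_comm,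
          mul_comm]

theorem AntitoneOn.countable_not_continuousAt {f : ℝ → ℝ} {s : Set ℝ} (hf : AntitoneOn f s)
    (hs : IsOpen s) : {x ∈ s | ¬ContinuousAt f x}.Countable := by
  refine hf.countable_not_continuousWithinAt.mono ?_
  rintro x ⟨hx, hc⟩
  exact ⟨hx, fun hcw => hc (hcw.continuousAt (hs.mem_nhds hx))⟩

theorem integral_mul_exp_eq_exp_sub_one {h γ : ℝ → ℝ} {a b : ℝ} (hab : a < b)
    (hint : IntervalIntegrable h volume a b) (hcont : {x ∈ Ioi a | ¬ContinuousAt h x}.Countable)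
    (hγ : ∀ x ∈ Ioc a b, γ x = ∫ t in a..x, h t) :
    ∫ x in a..b, h x * Real.exp (γ x) = Real.exp (γ b) - 1 := by
  set Γ : ℝ → ℝ := fun x => ∫ t in a..x, h t
  have hΓ : ContinuousOn (fun x => Real.exp (Γ x)) (Icc a b) := by
    have hint' := (intervalIntegrable_iff_integrableOn_Icc_of_le hab.le).1 hint
    rw [← uIcc_of_le hab.le] at hint' ⊢
    exact Real.continuous_exp.comp_continuousOn
      (intervalIntegral.continuousOn_primitive_interval hint')
  have hderiv : ∀ x ∈ Ioo a b \ {x ∈ Ioi a | ¬ContinuousAt h x},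
      HasDerivAt (fun x => Real.exp (Γ x)) (h x * Real.exp (Γ x)) x := by
    rintro x ⟨hx, hxc⟩
    have hmeas : StronglyMeasurableAtFilter h (nhds x) :=
      AEStronglyMeasurable.stronglyMeasurableAtFilter_of_mem
        (hint.1.mono_set Ioo_subset_Ioc_self).aestronglyMeasurable (isOpen_Ioo.mem_nhds hx)
    have hsub : uIcc a x ⊆ uIcc a b :=
      uIcc_subset_uIcc_left (by rw [uIcc_of_le hab.le]; exact Ioo_subset_Icc_self hx)
    have hcx : ContinuousAt h x := not_not.1 fun hc => hxc ⟨hx.1, hc⟩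
    simpa [mul_comm] using
      (intervalIntegral.integral_hasDerivAt_right (hint.mono_set hsub) hmeas hcx).exp
  have hftc := integral_eq_of_hasDerivAt_off_countable_of_le _ _ hab.le hcont hΓ hderiv
    (hint.mul_continuousOn (by rwa [uIcc_of_le hab.le]))
  rw [intervalIntegral.integral_congr_ae (g := fun x => h x * Real.exp (Γ x)), hftc,
    hγ b ⟨hab, le_rfl⟩]
  · simp [Γ]
  · refine .of_forall fun x hx => ?_
    rw [uIoc_of_le hab.le] at hx
    rw [hγ x hx]

theorem monotoneOn_of_eq_primitive {h γ : ℝ → ℝ} (h_nonneg : ∀ x, 0 < x → 0 ≤ h x)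
    (h_int : ∀ b, 0 < b → IntervalIntegrable h volume 0 b)
    (hγ : ∀ x, 0 < x → γ x = ∫ t in 0..x, h t) : MonotoneOn γ (Ioi 0) := by
  intro x hx y hy hxy
  rw [hγ x hx, hγ y hy]
  exact intervalIntegral.integral_mono_interval le_rfl (le_of_lt hx) hxy
    ((ae_restrict_mem measurableSet_Ioc).mono fun t ht => h_nonneg t ht.1) (h_int y hy)

theorem nonneg_of_eq_primitive {h γ : ℝ → ℝ} (h_nonneg : ∀ x, 0 < x → 0 ≤ h x)
    (h_int : ∀ b, 0 < b → IntervalIntegrable h volume 0 b)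
    (hγ : ∀ x, 0 < x → γ x = ∫ t in 0..x, h t) : ∀ x, 0 < x → 0 ≤ γ x := fun x hx => by
  rw [hγ x hx]
  simpa using intervalIntegral.integral_mono_interval le_rfl le_rfl hx.le
    ((ae_restrict_mem measurableSet_Ioc).mono fun t ht => h_nonneg t ht.1) (h_int x hx)

theorem integrableOn_exp_neg_Ioi_of_monotoneOn {μ : Measure ℝ} (hμ : μ (Ioi 0) ≠ ⊤)
    {γ : ℝ → ℝ} (hγ_mono : MonotoneOn γ (Ioi 0)) (hγ_nonneg : ∀ x, 0 < x → 0 ≤ γ x) :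
    IntegrableOn (fun m => Real.exp (-γ m)) (Ioi 0) μ := by
  have : IsFiniteMeasure (μ.restrict (Ioi 0)) := isFiniteMeasure_restrict.2 hμ
  refine Integrable.mono' (integrable_const 1) ?_ ?_
  · exact (aemeasurable_restrict_of_antitoneOn measurableSet_Ioi fun x hx y hy hxy =>
      Real.exp_le_exp.2 (neg_le_neg (hγ_mono hx hy hxy))).aestronglyMeasurable
  · filter_upwards [ae_restrict_mem measurableSet_Ioi] with m hm
    simpa using hγ_nonneg m hm

theorem integral_mul_exp_mul_setIntegral_Ioi {μ : Measure ℝ} [SFinite μ] (hμ : μ (Ioi 0) ≠ ⊤)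
    {h γ : ℝ → ℝ} (h_nonneg : ∀ x, 0 < x → 0 ≤ h x)
    (h_int : ∀ b, 0 < b → IntervalIntegrable h volume 0 b)
    (h_cont : {x ∈ Ioi 0 | ¬ContinuousAt h x}.Countable)
    (hγ : ∀ x, 0 < x → γ x = ∫ t in 0..x, h t)
    {l : ℝ} (hl : 0 < l) :
    ∫ z in 0..l, h z * Real.exp (γ z) * ∫ m in Ioi z, Real.exp (-γ m) ∂μ
      = μ.real (Ioc 0 l) + Real.exp (γ l) * (∫ m in Ioi l, Real.exp (-γ m) ∂μ)
        - ∫ m in Ioi 0, Real.exp (-γ m) ∂μ := by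
  have hγ_mono := monotoneOn_of_eq_primitive h_nonneg h_int hγ
  have hγ_nonneg := nonneg_of_eq_primitive h_nonneg h_int hγ
  have hg_int := integrableOn_exp_neg_Ioi_of_monotoneOn hμ hγ_mono hγ_nonneg
  have hw_int : IntegrableOn (fun z => h z * Real.exp (γ z)) (Ioc 0 l) := by
    refine (h_int l hl).1.mul_bdd (c := Real.exp (γ l)) ?_ ?_
    · exact (aemeasurable_restrict_of_monotoneOn measurableSet_Ioc fun x hx y hy hxy =>
        Real.exp_le_exp.2 (hγ_mono hx.1 hy.1 hxy)).aestronglyMeasurable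
    · filter_upwards [ae_restrict_mem measurableSet_Ioc] with z hz
      simpa using hγ_mono hz.1 hl hz.2
  have hinner : ∀ m ∈ Ioi (0 : ℝ), ∫ z in 0..min m l, h z * Real.exp (γ z)
      = Real.exp (γ (min m l)) - 1 := fun m hm =>
    integral_mul_exp_eq_exp_sub_one (lt_min hm hl) (h_int _ (lt_min hm hl)) h_cont
      fun x hx => hγ x hx.1
  have hlow : EqOn (fun m => Real.exp (-γ m) * (Real.exp (γ (min m l)) - 1))
      (fun m => 1 - Real.exp (-γ m)) (Ioc 0 l) := fun m hm => by
    simp only [min_eq_left hm.2, mul_sub, ← Real.exp_add, neg_add_cancel, Real.exp_zero, mul_one]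
  have hhigh : EqOn (fun m => Real.exp (-γ m) * (Real.exp (γ (min m l)) - 1))
      (fun m => (Real.exp (γ l) - 1) * Real.exp (-γ m)) (Ioi l) := fun m hm => by
    simp only [min_eq_right (le_of_lt (mem_Ioi.1 hm)), mul_comm]
  have hone_int : IntegrableOn (fun _ => (1 : ℝ)) (Ioc 0 l) μ :=
    integrableOn_const (ne_top_of_le_ne_top hμ (measure_mono Ioc_subset_Ioi_self))
  have hlow_int : IntegrableOn (fun m => 1 - Real.exp (-γ m)) (Ioc 0 l) μ :=
    hone_int.sub (hg_int.mono_set Ioc_subset_Ioi_self)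
  have hF_int : IntegrableOn (fun m => Real.exp (-γ m) * (Real.exp (γ (min m l)) - 1))
      (Ioi 0) μ := by
    rw [← Ioc_union_Ioi_eq_Ioi hl.le]
    exact (hlow_int.congr_fun hlow.symm measurableSet_Ioc).union
      (IntegrableOn.congr_fun ((hg_int.mono_set (Ioi_subset_Ioi hl.le)).const_mul _)
        hhigh.symm measurableSet_Ioi)
  -- Fubini turns the left side into `∫_{(0,∞)} e^{-γ m} (e^{γ (min m l)} - 1) dμ`.
  rw [intervalIntegral.integral_of_le hl.le,
    setIntegral_Ioc_mul_setIntegral_Ioi hl.le hw_int hg_int,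
    setIntegral_congr_fun measurableSet_Ioi fun m hm => by rw [hinner m hm],
    setIntegral_Ioi_eq_setIntegral_Ioc_add hl.le hF_int,
    setIntegral_congr_fun measurableSet_Ioc hlow, setIntegral_congr_fun measurableSet_Ioi hhigh,
    integral_sub hone_int (hg_int.mono_set Ioc_subset_Ioi_self),
    setIntegral_const, integral_const_mul, setIntegral_Ioi_eq_setIntegral_Ioc_add hl.le hg_int]
  simp only [smul_eq_mul, mul_one]
  ring

theorem integrableOn_exp_mul_mul_setIntegral_Ioi {μ : Measure ℝ} (hμ : μ (Ioi 0) ≠ ⊤)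
    {γ c : ℝ → ℝ} (hγ_mono : MonotoneOn γ (Ioi 0)) (hγ_nonneg : ∀ x, 0 < x → 0 ≤ γ x)
    {l : ℝ} (hl : 0 < l) (hc : IntegrableOn c (Ioc 0 l)) :
    IntegrableOn (fun z => Real.exp (γ z) * c z * ∫ m in Ioi z, Real.exp (-γ m) ∂μ)
      (Ioc 0 l) := by
  set G : ℝ → ℝ := fun z => ∫ m in Ioi z, Real.exp (-γ m) ∂μ
  have hG : AntitoneOn G (Ici 0) := antitoneOn_setIntegral_Ioi
    (integrableOn_exp_neg_Ioi_of_monotoneOn hμ hγ_mono hγ_nonneg) fun x _ => (Real.exp_pos _).le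
  have hexp : MonotoneOn (fun z => Real.exp (γ z)) (Ioc 0 l) := fun x hx y hy hxy =>
    Real.exp_le_exp.2 (hγ_mono hx.1 hy.1 hxy)
  refine IntegrableOn.congr_fun (f := fun z => c z * (Real.exp (γ z) * G z)) ?_
    (fun z _ => by ring) measurableSet_Ioc
  refine hc.mul_bdd (c := Real.exp (γ l) * G 0) ?_ ?_
  · exact ((aemeasurable_restrict_of_monotoneOn measurableSet_Ioc hexp).mul
      (aemeasurable_restrict_of_antitoneOn measurableSet_Ioc
        (hG.mono fun z hz => le_of_lt hz.1))).aestronglyMeasurable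
  · filter_upwards [ae_restrict_mem measurableSet_Ioc] with z hz
    have hGz : 0 ≤ G z := setIntegral_nonneg measurableSet_Ioi fun _ _ => (Real.exp_pos _).le
    rw [Real.norm_eq_abs, abs_of_nonneg (mul_nonneg (Real.exp_pos _).le hGz)]
    exact mul_le_mul (hexp hz ⟨hl, le_rfl⟩ hz.2)
      (hG (mem_Ici.2 le_rfl) (le_of_lt hz.1) (le_of_lt hz.1)) hGz (Real.exp_pos _).le

theorem IntegrableOn.of_sub_of_nonneg_of_nonpos {μ : Measure ℝ} {u v : ℝ → ℝ} {s : Set ℝ}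
    (hs : MeasurableSet s) (h : IntegrableOn (fun x => u x - v x) s μ)
    (hu : AEStronglyMeasurable u (μ.restrict s)) (hv : AEStronglyMeasurable v (μ.restrict s))
    (hu0 : ∀ x ∈ s, 0 ≤ u x) (hv0 : ∀ x ∈ s, v x ≤ 0) :
    IntegrableOn u s μ ∧ IntegrableOn v s μ := by
  refine ⟨h.mono' hu ?_, h.mono' hv ?_⟩
  · filter_upwards [ae_restrict_mem hs] with x hx
    rw [Real.norm_eq_abs, abs_of_nonneg (hu0 x hx)]
    linarith [hv0 x hx]
  · filter_upwards [ae_restrict_mem hs] with x hx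
    rw [Real.norm_eq_abs, abs_of_nonpos (hv0 x hx)]
    linarith [hu0 x hx]

theorem half_mul_sub_integral_exp_mul_setIntegral_Ioi {μ : Measure ℝ} [SFinite μ]
    (hμ : μ (Ioi 0) ≠ ⊤) {u v γ : ℝ → ℝ} (hu_anti : AntitoneOn u (Ioi 0))
    (hv_mono : MonotoneOn v (Ioi 0)) (hu_nonneg : ∀ x, 0 < x → 0 ≤ u x)
    (hv_nonpos : ∀ x, 0 < x → v x ≤ 0)
    (huv_int : ∀ b, 0 < b → IntervalIntegrable (fun t => u t - v t) volume 0 b)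
    (hγ : ∀ x, 0 < x → γ x = 1 / 2 * ∫ t in 0..x, (u t - v t)) {l : ℝ} (hl : 0 < l) :
    1 / 2 * ((∫ z in 0..l, Real.exp (γ z) * u z * ∫ m in Ioi z, Real.exp (-γ m) ∂μ)
      - ∫ z in 0..l, Real.exp (γ z) * v z * ∫ m in Ioi z, Real.exp (-γ m) ∂μ)
      = μ.real (Ioc 0 l) + Real.exp (γ l) * (∫ m in Ioi l, Real.exp (-γ m) ∂μ)
        - ∫ m in Ioi 0, Real.exp (-γ m) ∂μ := by
  set h : ℝ → ℝ := fun t => 1 / 2 * (u t - v t)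
  have h_anti : AntitoneOn h (Ioi 0) := fun x hx y hy hxy => by
    simp only [h]
    linarith [hu_anti hx hy hxy, hv_mono hx hy hxy]
  have h_nonneg : ∀ x, 0 < x → 0 ≤ h x := fun x hx => by
    simp only [h]
    linarith [hu_nonneg x hx, hv_nonpos x hx]
  have h_int : ∀ b, 0 < b → IntervalIntegrable h volume 0 b := fun b hb =>
    (huv_int b hb).const_mul _
  have hγ' : ∀ x, 0 < x → γ x = ∫ t in 0..x, h t := fun x hx => by
    rw [intervalIntegral.integral_const_mul, hγ x hx]
  have hγ_mono := monotoneOn_of_eq_primitive h_nonneg h_int hγ'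
  have hγ_nonneg := nonneg_of_eq_primitive h_nonneg h_int hγ'
  obtain ⟨hu_int, hv_int⟩ := IntegrableOn.of_sub_of_nonneg_of_nonpos measurableSet_Ioc
    (huv_int l hl).1
    (aemeasurable_restrict_of_antitoneOn measurableSet_Ioc
      (hu_anti.mono Ioc_subset_Ioi_self)).aestronglyMeasurable
    (aemeasurable_restrict_of_monotoneOn measurableSet_Ioc
      (hv_mono.mono Ioc_subset_Ioi_self)).aestronglyMeasurable
    (fun x hx => hu_nonneg x hx.1) (fun x hx => hv_nonpos x hx.1)
  rw [← intervalIntegral.integral_sub, ← intervalIntegral.integral_const_mul,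
    ← integral_mul_exp_mul_setIntegral_Ioi hμ h_nonneg h_int
      (h_anti.countable_not_continuousAt isOpen_Ioi) hγ' hl]
  · exact intervalIntegral.integral_congr fun z _ => by ring
  all_goals rw [intervalIntegrable_iff_integrableOn_Ioc_of_le hl.le]
  · exact integrableOn_exp_mul_mul_setIntegral_Ioi hμ hγ_mono hγ_nonneg hl hu_int
  · exact integrableOn_exp_mul_mul_setIntegral_Ioi hμ hγ_mono hγ_nonneg hl hv_int

theorem LipschitzWith.le_of_hasDerivWithinAt_Ioi {F : ℝ → ℝ} {K : NNReal}
    (hF : LipschitzWith K F) {x d : ℝ} (hd : HasDerivWithinAt F d (Ioi x) x) : d ≤ K := by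
  rw [hasDerivWithinAt_iff_tendsto_slope, sdiff_singleton_eq_self self_notMem_Ioi] at hd
  refine le_of_tendsto hd (eventually_nhdsWithin_of_forall fun y (hy : x < y) => ?_)
  have := hF.dist_le_mul y x
  rw [Real.dist_eq, Real.dist_eq, abs_of_pos (sub_pos.2 hy)] at this
  rw [slope_def_field, div_le_iff₀ (sub_pos.2 hy)]
  exact (le_abs_self _).trans this

theorem StieltjesFunction.measure_Ioi_ne_top (f : StieltjesFunction ℝ) {a C : ℝ}
    (hC : ∀ x, a ≤ x → f x ≤ C) (b : ℝ) : f.measure (Ioi b) ≠ ⊤ := by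
  have hbdd : BddAbove (range f) := ⟨C, by
    rintro _ ⟨x, rfl⟩
    exact (le_total a x).elim (hC x) fun hxa => (f.mono hxa).trans (hC a le_rfl)⟩
  rw [f.measure_Ioi (tendsto_atTop_ciSup f.mono hbdd)]
  exact ENNReal.ofReal_ne_top

theorem intervalIntegrable_of_tendsto_const_mul_integral {f γ : ℝ → ℝ} {c : ℝ}
    (hγ : ∀ x, 0 < x → γ x = c * ∫ t in 0..x, f t) (hγ_top : Tendsto γ atTop atTop)
    {b : ℝ} (hb : 0 < b) : IntervalIntegrable f volume 0 b := by
  obtain ⟨x, hγx, hbx⟩ := ((hγ_top.eventually_ne_atTop 0).and (eventually_ge_atTop b)).exists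
  refine IntervalIntegrable.mono_set (b := x) ?_
    (uIcc_subset_uIcc_left (by rw [uIcc_of_le (hb.le.trans hbx)]; exact ⟨hb.le, hbx⟩))
  by_contra hfx
  -- otherwise the integral takes the junk value `0`, and so does `γ x`
  exact hγx (by rw [hγ x (hb.trans_le hbx), intervalIntegral.integral_undef hfx, mul_zero])

theorem stmt1_general (F : ℝ → ℝ) (F' : StieltjesFunction ℝ)
    (K : NNReal) (hLip : LipschitzWith K F)
    (hF' : ∀ x : ℝ, 0 ≤ x → HasDerivWithinAt F (F' x) (Set.Ioi x) x)
    (φp φm : ℝ → ℝ)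
    (hφp_pos : ∀ l : ℝ, 0 < l → 0 < φp l)
    (hφm_neg : ∀ l : ℝ, 0 < l → φm l < 0)
    (hφp_mono : MonotoneOn φp (Set.Ioi 0))
    (hφm_anti : AntitoneOn φm (Set.Ioi 0))
    (γ : ℝ → ℝ)
    (hγ : ∀ l : ℝ, 0 < l → γ l = (1/2) * ∫ m in (0:ℝ)..l, (1 / φp m - 1 / φm m))
    (hγtop : Tendsto γ atTop atTop)
    (Ap Am : ℝ → ℝ)
    (hAp0 : Ap 0 = F' 0 + ∫ m in Set.Ioi (0:ℝ), Real.exp (-γ m) ∂F'.measure)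
    (hAm0 : Am 0 = -(F' 0) - ∫ m in Set.Ioi (0:ℝ), Real.exp (-γ m) ∂F'.measure)
    (hAp : ∀ l : ℝ, 0 ≤ l → Ap l = Ap 0 + ∫ z in (0:ℝ)..l,
        (Real.exp (γ z) / φp z) * (∫ m in Set.Ioi z, Real.exp (-γ m) ∂F'.measure))
    (hAm : ∀ l : ℝ, 0 ≤ l → Am l = Am 0 + ∫ z in (0:ℝ)..l,
        (Real.exp (γ z) / φm z) * (∫ m in Set.Ioi z, Real.exp (-γ m) ∂F'.measure))
    (l : ℝ) (hl : 0 < l) :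
    (1/2) * (Ap l - Am l)
      = F' l + Real.exp (γ l) * ∫ m in Set.Ioi l, Real.exp (-γ m) ∂F'.measure := by
  have hμ : F'.measure (Ioi 0) ≠ ⊤ :=
    F'.measure_Ioi_ne_top (fun x hx => hLip.le_of_hasDerivWithinAt_Ioi (hF' x hx)) 0
  have hμ_Ioc : F'.measure.real (Ioc 0 l) = F' l - F' 0 := by
    rw [measureReal_def, F'.measure_Ioc, ENNReal.toReal_ofReal (sub_nonneg.2 (F'.mono hl.le))]
  have key := half_mul_sub_integral_exp_mul_setIntegral_Ioi hμ
    (fun x hx y hy hxy => one_div_le_one_div_of_le (hφp_pos x hx) (hφp_mono hx hy hxy))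
    (fun x hx y hy hxy => one_div_le_one_div_of_neg_of_le (hφm_neg x hx) (hφm_anti hx hy hxy))
    (fun x hx => (one_div_pos.2 (hφp_pos x hx)).le)
    (fun x hx => (one_div_neg.2 (hφm_neg x hx)).le)
    (fun b hb => intervalIntegrable_of_tendsto_const_mul_integral hγ hγtop hb) hγ hl
  simp only [mul_one_div] at key
  rw [hAp l hl.le, hAm l hl.le, hAp0, hAm0]
  linarith

/-- Identity (Hrel1): `(1/2)(A₊(l) − A₋(l)) = F'(l) + e^{γ(l)} ∫_{(l,∞)} e^{-γ} dF''`. -/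
theorem stmt1 (F : ℝ → ℝ) (F' : StieltjesFunction ℝ)
    (K : NNReal) (hLip : LipschitzWith K F)
    (hconv : ConvexOn ℝ (Set.Ici 0) F)
    (hF' : ∀ x : ℝ, 0 ≤ x → HasDerivWithinAt F (F' x) (Set.Ioi x) x)
    (φp φm : ℝ → ℝ)
    (hφp_pos : ∀ l : ℝ, 0 < l → 0 < φp l)
    (hφm_neg : ∀ l : ℝ, 0 < l → φm l < 0)
    (hφp_mono : MonotoneOn φp (Set.Ioi 0))
    (hφm_anti : AntitoneOn φm (Set.Ioi 0))
    (hφp_rc : ∀ x : ℝ, 0 < x → ContinuousWithinAt φp (Set.Ici x) x)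
    (hφm_rc : ∀ x : ℝ, 0 < x → ContinuousWithinAt φm (Set.Ici x) x)
    (γ : ℝ → ℝ)
    (hγ : ∀ l : ℝ, 0 < l → γ l = (1/2) * ∫ m in (0:ℝ)..l, (1 / φp m - 1 / φm m))
    (hγ0 : Tendsto γ (nhdsWithin 0 (Set.Ioi 0)) (nhds 0))
    (hγtop : Tendsto γ atTop atTop)
    (Ap Am : ℝ → ℝ)
    (hAp0 : Ap 0 = F' 0 + ∫ m in Set.Ioi (0:ℝ), Real.exp (-γ m) ∂F'.measure)
    (hAm0 : Am 0 = -(F' 0) - ∫ m in Set.Ioi (0:ℝ), Real.exp (-γ m) ∂F'.measure)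
    (hAp : ∀ l : ℝ, 0 ≤ l → Ap l = Ap 0 + ∫ z in (0:ℝ)..l,
        (Real.exp (γ z) / φp z) * (∫ m in Set.Ioi z, Real.exp (-γ m) ∂F'.measure))
    (hAm : ∀ l : ℝ, 0 ≤ l → Am l = Am 0 + ∫ z in (0:ℝ)..l,
        (Real.exp (γ z) / φm z) * (∫ m in Set.Ioi z, Real.exp (-γ m) ∂F'.measure))
    (l : ℝ) (hl : 0 < l) :
    (1/2) * (Ap l - Am l)
      = F' l + Real.exp (γ l) * ∫ m in Set.Ioi l, Real.exp (-γ m) ∂F'.measure :=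
  stmt1_general F F' K hLip hF' φp φm hφp_pos hφm_neg hφp_mono hφm_anti γ hγ hγtop Ap Am hAp0 hAm0
    hAp hAm l hl
end

section
/- Let μ be a symmetric probability measure on ℝ with positive density μ(x) with respect to Lebesgue measure. Define ψ(x) := ∫₀^x (y μ(y) / μ([y,∞))) dy for x ≥ 0 and γ(l) := ∫₀^l (1/φ(m)) dm where φ is the inverse of ψ. Then for all x ≥ 0, e^{-γ(ψ(x))} = 2μ([x,∞)). -/
open MeasureTheory Set

/-!
Write `F y = μ([y, ∞))`. Since `F' = -f`, `ψ' y = y f(y) / F(y)` and `φ (ψ t) = t`, the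
substitution `m = ψ t` turns `γ (ψ x)` into `∫₀^x f / F = log F(0) - log F(x)`, and `F(0) = 1/2`
by symmetry, so `exp (-γ (ψ x)) = F(x) / F(0) = 2 F(x)`.
-/

section Tail

variable {f : ℝ → ℝ}

theorem integral_Ici_pos (hpos : ∀ x, 0 < f x) (hf : Integrable f) (y : ℝ) :
    0 < ∫ z in Ici y, f z := by
  have hsupp : Function.support f = univ := eq_univ_of_forall fun t => (hpos t).ne'
  rw [setIntegral_pos_iff_support_of_nonneg_ae (.of_forall fun t => (hpos t).le) hf.integrableOn,
    hsupp, univ_inter, Real.volume_Ici]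
  exact ENNReal.zero_lt_top

theorem integral_Ici_eq_integral_sub_integral_Iic (hf : Integrable f) (y : ℝ) :
    ∫ z in Ici y, f z = (∫ z, f z) - ∫ z in Iic y, f z := by
  rw [← intervalIntegral.integral_Iic_add_Ioi hf.integrableOn hf.integrableOn,
    integral_Ici_eq_integral_Ioi]
  ring

theorem hasDerivAt_integral_Ici (hcont : Continuous f) (hf : Integrable f) (t : ℝ) :
    HasDerivAt (fun y => ∫ z in Ici y, f z) (-f t) t := by
  have htail : (fun y => ∫ z in Ici y, f z) =
      fun y => ((∫ z, f z) - ∫ z in Iic 0, f z) - ∫ z in (0 : ℝ)..y, f z := by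
    ext y
    rw [integral_Ici_eq_integral_sub_integral_Iic hf,
      ← intervalIntegral.integral_Iic_sub_Iic hf.integrableOn hf.integrableOn]
    ring
  rw [htail]
  exact (hcont.integral_hasStrictDerivAt 0 t).hasDerivAt.const_sub _

theorem integral_Ici_zero_of_even (hsym : ∀ x, f (-x) = f x) (hf : Integrable f) :
    ∫ z in Ici 0, f z = (∫ z, f z) / 2 := by
  have hIic : ∫ z in Iic 0, f z = ∫ z in Ici 0, f z := by
    rw [integral_Ici_eq_integral_Ioi, ← neg_zero, ← integral_comp_neg_Ioi, neg_zero]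
    exact setIntegral_congr_fun measurableSet_Ioi fun t _ => hsym t
  linarith [integral_Ici_eq_integral_sub_integral_Iic hf 0]

theorem continuous_integral_Ici (hcont : Continuous f) (hf : Integrable f) :
    Continuous fun y => ∫ z in Ici y, f z :=
  continuous_iff_continuousAt.2 fun t => (hasDerivAt_integral_Ici hcont hf t).continuousAt

theorem integral_div_integral_Ici_eq_log_sub_log (hcont : Continuous f) (hpos : ∀ x, 0 < f x)
    (hf : Integrable f) (a b : ℝ) :
    ∫ t in a..b, f t / ∫ z in Ici t, f z =
      Real.log (∫ z in Ici a, f z) - Real.log (∫ z in Ici b, f z) := by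
  have hint : IntervalIntegrable (fun t => -f t / ∫ z in Ici t, f z) volume a b :=
    (hcont.neg.div (continuous_integral_Ici hcont hf) fun t => (integral_Ici_pos hpos hf t).ne')
      |>.intervalIntegrable a b
  rw [← neg_sub, ← intervalIntegral.integral_eq_sub_of_hasDerivAt (fun t _ =>
      (hasDerivAt_integral_Ici hcont hf t).log (integral_Ici_pos hpos hf t).ne') hint,
    ← intervalIntegral.integral_neg]
  simp only [neg_div, neg_neg]

end Tail

theorem integral_comp_primitive_of_nonneg {g : ℝ → ℝ} (hg : Continuous g) {a b : ℝ} (hab : a ≤ b)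
    (hg_nonneg : ∀ t ∈ Icc a b, 0 ≤ g t) (h : ℝ → ℝ) :
    ∫ m in (0:ℝ)..∫ s in a..b, g s, h m = ∫ t in a..b, g t * h (∫ s in a..t, g s) := by
  -- Change of variables for monotone maps, which needs no regularity of `h`.
  have hsubst := integral_Icc_deriv_smul_of_deriv_nonneg (g := h)
    (intervalIntegral.continuous_primitive (hg.intervalIntegrable · ·) a).continuousOn
    (fun t _ => (hg.integral_hasStrictDerivAt a t).hasDerivAt)
    (fun t ht => hg_nonneg t (Ioo_subset_Icc_self ht)) hab
  rw [intervalIntegral.integral_same] at hsubst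
  rw [intervalIntegral.integral_of_le (intervalIntegral.integral_nonneg hab hg_nonneg),
    ← integral_Icc_eq_integral_Ioc, ← hsubst, intervalIntegral.integral_of_le hab,
    integral_Icc_eq_integral_Ioc]
  simp only [smul_eq_mul]

/-- For a symmetric positive density `f`, the Vallois function `ψ` and
`γ(l) = ∫₀^l dm/φ(m)` (with `φ = ψ⁻¹`) satisfy `e^{-γ(ψ(x))} = 2 μ([x,∞))`. -/
theorem stmt4 (f : ℝ → ℝ) (hcont : Continuous f)
    (hpos : ∀ x, 0 < f x) (hsym : ∀ x, f (-x) = f x)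
    (hInt : Integrable f) (hprob : ∫ x, f x = 1)
    (ψ φ γ : ℝ → ℝ)
    (hψ : ∀ x : ℝ, 0 ≤ x →
      ψ x = ∫ y in (0:ℝ)..x, y * f y / (∫ z in Set.Ici y, f z))
    (hφψ : ∀ x : ℝ, 0 ≤ x → φ (ψ x) = x)
    (hγ : ∀ l : ℝ, 0 ≤ l → γ l = ∫ m in (0:ℝ)..l, 1 / φ m)
    (x : ℝ) (hx : 0 ≤ x) :
    Real.exp (-(γ (ψ x))) = 2 * ∫ z in Set.Ici x, f z := by
  have hFpos : ∀ y, 0 < ∫ z in Ici y, f z := integral_Ici_pos hpos hInt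
  have hg_cont : Continuous fun y => y * f y / ∫ z in Ici y, f z :=
    (continuous_id.mul hcont).div (continuous_integral_Ici hcont hInt) fun t => (hFpos t).ne'
  have hg_nonneg : ∀ t ∈ Icc 0 x, 0 ≤ t * f t / ∫ z in Ici t, f z := fun t ht =>
    div_nonneg (mul_nonneg ht.1 (hpos t).le) (hFpos t).le
  have hψx : 0 ≤ ψ x := (hψ x hx).symm ▸ intervalIntegral.integral_nonneg hx hg_nonneg
  have hγψ : γ (ψ x) = ∫ t in (0:ℝ)..x, f t / ∫ z in Ici t, f z := by
    rw [hγ _ hψx, hψ x hx,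
      integral_comp_primitive_of_nonneg hg_cont hx hg_nonneg]
    refine intervalIntegral.integral_congr_ae (.of_forall fun t ht => ?_)
    rw [uIoc_of_le hx] at ht
    rw [← hψ t ht.1.le, hφψ t ht.1.le]
    field_simp [ht.1.ne']
  have hF0 : ∫ z in Ici 0, f z = 1 / 2 := by rw [integral_Ici_zero_of_even hsym hInt, hprob]
  rw [hγψ, integral_div_integral_Ici_eq_log_sub_log hcont hpos hInt, hF0, neg_sub,
    ← Real.log_div (hFpos x).ne' one_half_pos.ne', Real.exp_log (div_pos (hFpos x) one_half_pos)]
  ring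
end

section
/- For all t > 0, x > 0 and 0 < y < x: x e^{-t²x²/2} ∫_{ty}^∞ e^{-z²/2} dz − y e^{-t²y²/2} ∫_{tx}^∞ e^{-z²/2} dz = ∫_{txy}^∞ (e^{-(z²/x² + t²x²)/2} − e^{-(z²/y² + t²y²)/2}) dz, and this quantity is strictly positive. -/
open MeasureTheory Set

lemma aux_cov (t c b : ℝ) (hc : 0 < c) :
    c * Real.exp (-t ^ 2 * c ^ 2 / 2) * (∫ z in Set.Ici b, Real.exp (-z ^ 2 / 2))
      = ∫ z in Set.Ici (c * b), Real.exp (-(z ^ 2 / c ^ 2 + t ^ 2 * c ^ 2) / 2) := by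
  rw [integral_Ici_eq_integral_Ioi, integral_Ici_eq_integral_Ioi]
  have h := MeasureTheory.integral_comp_mul_left_Ioi
      (fun z => Real.exp (-(z ^ 2 / c ^ 2 + t ^ 2 * c ^ 2) / 2)) b hc
  have h2 : (∫ z in Set.Ioi b,
      Real.exp (-((c * z) ^ 2 / c ^ 2 + t ^ 2 * c ^ 2) / 2))
      = Real.exp (-t ^ 2 * c ^ 2 / 2) * ∫ z in Set.Ioi b, Real.exp (-z ^ 2 / 2) := by
    rw [← MeasureTheory.integral_const_mul]
    congr 1 with z
    rw [← Real.exp_add]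
    congr 1
    field_simp
    ring
  simp only [h2, smul_eq_mul] at h
  rw [mul_assoc, h, ← mul_assoc, mul_inv_cancel₀ hc.ne', one_mul]

lemma aux_integrable (t c : ℝ) (ht : 0 < t) (hc : 0 < c) (a : ℝ) :
    IntegrableOn (fun z => Real.exp (-(z ^ 2 / c ^ 2 + t ^ 2 * c ^ 2) / 2)) (Set.Ioi a) := by
  have : (fun z => Real.exp (-(z ^ 2 / c ^ 2 + t ^ 2 * c ^ 2) / 2))
      = fun z => Real.exp (-(t ^ 2 * c ^ 2) / 2) * Real.exp (-(1 / (2 * c ^ 2)) * z ^ 2) := by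
    ext z; rw [← Real.exp_add]; congr 1; field_simp; ring
  rw [this]
  exact ((integrable_exp_neg_mul_sq (by positivity : (0:ℝ) < 1 / (2 * c ^ 2))).const_mul
    _).integrableOn

/-- Change-of-variables identity and positivity for the Gaussian tail
comparison used for the Gaussian peacock. -/
theorem stmt10 (t x y : ℝ) (ht : 0 < t) (hx : 0 < x) (hy : 0 < y) (hyx : y < x) :
    x * Real.exp (-t ^ 2 * x ^ 2 / 2) * (∫ z in Set.Ici (t * y), Real.exp (-z ^ 2 / 2))
        - y * Real.exp (-t ^ 2 * y ^ 2 / 2) * (∫ z in Set.Ici (t * x), Real.exp (-z ^ 2 / 2))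
      = (∫ z in Set.Ici (t * x * y),
          (Real.exp (-(z ^ 2 / x ^ 2 + t ^ 2 * x ^ 2) / 2)
            - Real.exp (-(z ^ 2 / y ^ 2 + t ^ 2 * y ^ 2) / 2)))
    ∧ 0 <
        x * Real.exp (-t ^ 2 * x ^ 2 / 2) * (∫ z in Set.Ici (t * y), Real.exp (-z ^ 2 / 2))
          - y * Real.exp (-t ^ 2 * y ^ 2 / 2) * (∫ z in Set.Ici (t * x), Real.exp (-z ^ 2 / 2)) := by
  have h1 := aux_cov t x (t * y) hx
  have h2 := aux_cov t y (t * x) hy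
  have hx1 : x * (t * y) = t * x * y := by ring
  have hy1 : y * (t * x) = t * x * y := by ring
  rw [hx1] at h1; rw [hy1] at h2
  have hint1 := aux_integrable t x ht hx (t * x * y)
  have hint2 := aux_integrable t y ht hy (t * x * y)
  have key :
      x * Real.exp (-t ^ 2 * x ^ 2 / 2) * (∫ z in Set.Ici (t * y), Real.exp (-z ^ 2 / 2))
        - y * Real.exp (-t ^ 2 * y ^ 2 / 2) * (∫ z in Set.Ici (t * x), Real.exp (-z ^ 2 / 2))
      = ∫ z in Set.Ici (t * x * y),
          (Real.exp (-(z ^ 2 / x ^ 2 + t ^ 2 * x ^ 2) / 2)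
            - Real.exp (-(z ^ 2 / y ^ 2 + t ^ 2 * y ^ 2) / 2)) := by
    rw [h1, h2, integral_Ici_eq_integral_Ioi, integral_Ici_eq_integral_Ioi,
      integral_Ici_eq_integral_Ioi, ← integral_sub hint1 hint2]
  refine ⟨key, ?_⟩
  rw [key, integral_Ici_eq_integral_Ioi]
  have hpos : ∀ z ∈ Set.Ioi (t * x * y),
      0 < Real.exp (-(z ^ 2 / x ^ 2 + t ^ 2 * x ^ 2) / 2)
        - Real.exp (-(z ^ 2 / y ^ 2 + t ^ 2 * y ^ 2) / 2) := by
    intro z hz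
    rw [Set.mem_Ioi] at hz
    have htxy : 0 < t * x * y := by positivity
    have hz2 : t ^ 2 * x ^ 2 * y ^ 2 < z ^ 2 := by nlinarith
    have : z ^ 2 / x ^ 2 + t ^ 2 * x ^ 2 < z ^ 2 / y ^ 2 + t ^ 2 * y ^ 2 := by
      rw [div_add' _ _ _ (by positivity), div_add' _ _ _ (by positivity),
        div_lt_div_iff₀ (by positivity) (by positivity)]
      nlinarith [mul_pos (by nlinarith : (0:ℝ) < z ^ 2 - t ^ 2 * x ^ 2 * y ^ 2)
        (by nlinarith : (0:ℝ) < x ^ 2 - y ^ 2)]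
    have := Real.exp_lt_exp.2 (by linarith : -(z ^ 2 / y ^ 2 + t ^ 2 * y ^ 2) / 2
        < -(z ^ 2 / x ^ 2 + t ^ 2 * x ^ 2) / 2)
    linarith
  refine (setIntegral_pos_iff_support_of_nonneg_ae ?_ ?_).mpr ?_
  · filter_upwards [ae_restrict_mem measurableSet_Ioi] with z hz using (hpos z hz).le
  · exact hint1.sub hint2
  · refine lt_of_lt_of_le ?_ (measure_mono
      (Set.subset_inter (fun z hz => (hpos z hz).ne') (subset_refl _)))
    simp [Real.volume_Ioi]
end

section
/- Let μ_t be the centered Gaussian density with variance t > 0 and R_t(x) := ∫_x^∞ μ_t(z) dz. Define ψ_t(x) := ∫₀^x (y μ_t(y)/R_t(y)) dy for x ≥ 0. Then for every fixed x > 0 the map t ↦ ψ_t(x) is strictly decreasing on (0,∞). -/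
open MeasureTheory Set

noncomputable def phiG (u : ℝ) : ℝ := (Real.sqrt (2 * Real.pi))⁻¹ * Real.exp (-u ^ 2 / 2)

noncomputable def RG (u : ℝ) : ℝ := ∫ z in Set.Ici u, phiG z

lemma phiG_pos (u : ℝ) : 0 < phiG u := by
  have h : 0 < Real.sqrt (2 * Real.pi) := Real.sqrt_pos.mpr (by positivity)
  exact mul_pos (inv_pos.mpr h) (Real.exp_pos _)

lemma continuous_phiG : Continuous phiG := by
  unfold phiG; fun_prop

lemma integrable_phiG : Integrable phiG := by
  have h : Integrable (fun u : ℝ => Real.exp (-(1/2 : ℝ) * u ^ 2)) :=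
    integrable_exp_neg_mul_sq (by norm_num)
  have h2 := h.const_mul (Real.sqrt (2 * Real.pi))⁻¹
  refine h2.congr (Filter.Eventually.of_forall fun u => ?_)
  unfold phiG
  rw [show -u ^ 2 / 2 = -(1/2 : ℝ) * u ^ 2 by ring]

lemma RG_pos (u : ℝ) : 0 < RG u := by
  rw [RG, setIntegral_pos_iff_support_of_nonneg_ae
    (Filter.Eventually.of_forall fun z => (phiG_pos z).le) integrable_phiG.integrableOn]
  have hs : Function.support phiG = Set.univ := Set.eq_univ_of_forall fun u => (phiG_pos u).ne'
  rw [hs, Set.univ_inter]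
  simp [Real.volume_Ici]

lemma RG_translate (u : ℝ) : RG u = ∫ s in Set.Ioi (0:ℝ), phiG (u + s) := by
  rw [RG, integral_Ici_eq_integral_Ioi, ← integral_indicator measurableSet_Ioi,
    ← integral_add_left_eq_self (fun z => (Set.Ioi u).indicator phiG z) u,
    ← integral_indicator measurableSet_Ioi]
  congr 1
  funext s
  simp only [Set.indicator_apply, Set.mem_Ioi, lt_add_iff_pos_right]

lemma RG_eq_mul (u : ℝ) :
    RG u = phiG u * ∫ s in Set.Ioi (0:ℝ), Real.exp (-(u * s) - s ^ 2 / 2) := by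
  rw [RG_translate]
  have hpt : ∀ s : ℝ, phiG (u + s) = phiG u * Real.exp (-(u * s) - s ^ 2 / 2) := by
    intro s
    unfold phiG
    rw [mul_assoc, ← Real.exp_add]
    congr 1
    ring
  simp only [hpt]
  exact integral_const_mul _ _

lemma integrableOn_exp_aux {u : ℝ} (hu : 0 < u) :
    IntegrableOn (fun s : ℝ => Real.exp (-(u * s) - s ^ 2 / 2)) (Set.Ioi 0) := by
  have hg : IntegrableOn (fun s : ℝ => Real.exp (-(1/2 : ℝ) * s ^ 2)) (Set.Ioi 0) :=
    (integrable_exp_neg_mul_sq (by norm_num)).integrableOn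
  refine hg.mono' (Continuous.aestronglyMeasurable (by fun_prop)) ?_
  rw [ae_restrict_iff' measurableSet_Ioi]
  refine Filter.Eventually.of_forall fun s hs => ?_
  rw [Real.norm_eq_abs, Real.abs_exp]
  refine Real.exp_le_exp.mpr ?_
  have : 0 < s := hs
  nlinarith [mul_pos hu this]

lemma F_strict {a b : ℝ} (ha : 0 < a) (hab : a < b) :
    a * phiG a / RG a < b * phiG b / RG b := by
  have hb : 0 < b := ha.trans hab
  set Ea := ∫ s in Set.Ioi (0:ℝ), Real.exp (-(a * s) - s ^ 2 / 2) with hEa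
  set Eb := ∫ s in Set.Ioi (0:ℝ), Real.exp (-(b * s) - s ^ 2 / 2) with hEb
  have hInta : IntegrableOn (fun s : ℝ => Real.exp (-(a * s) - s ^ 2 / 2) / a) (Set.Ioi 0) :=
    (integrableOn_exp_aux ha).div_const a
  have hIntb : IntegrableOn (fun s : ℝ => Real.exp (-(b * s) - s ^ 2 / 2) / b) (Set.Ioi 0) :=
    (integrableOn_exp_aux hb).div_const b
  -- pointwise strict inequality on Ioi 0
  have hpt : ∀ s : ℝ, 0 < s →
      Real.exp (-(b * s) - s ^ 2 / 2) / b < Real.exp (-(a * s) - s ^ 2 / 2) / a := by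
    intro s hs
    have h1 : Real.exp (-(b * s) - s ^ 2 / 2) ≤ Real.exp (-(a * s) - s ^ 2 / 2) :=
      Real.exp_le_exp.mpr (by nlinarith)
    refine lt_of_le_of_lt ?_ (div_lt_div_of_pos_left (Real.exp_pos _) ha hab)
    gcongr
  have hlt : (∫ s in Set.Ioi (0:ℝ), Real.exp (-(b * s) - s ^ 2 / 2) / b)
      < ∫ s in Set.Ioi (0:ℝ), Real.exp (-(a * s) - s ^ 2 / 2) / a := by
    have hdiff : 0 < ∫ s in Set.Ioi (0:ℝ),
        (Real.exp (-(a * s) - s ^ 2 / 2) / a - Real.exp (-(b * s) - s ^ 2 / 2) / b) := by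
      refine (setIntegral_pos_iff_support_of_nonneg_ae ?_ ?_).mpr ?_
      · exact (ae_restrict_iff' measurableSet_Ioi).mpr
          (Filter.Eventually.of_forall fun s hs => (sub_pos.mpr (hpt s hs)).le)
      · exact hInta.sub hIntb
      · have hsub : Set.Ioi (0:ℝ) ⊆ (Function.support fun s =>
            Real.exp (-(a * s) - s ^ 2 / 2) / a - Real.exp (-(b * s) - s ^ 2 / 2) / b)
            ∩ Set.Ioi 0 :=
          fun s hs => ⟨Function.mem_support.mpr (sub_pos.mpr (hpt s hs)).ne', hs⟩
        calc (0:ENNReal) < volume (Set.Ioi (0:ℝ)) := by simp [Real.volume_Ioi]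
          _ ≤ _ := measure_mono hsub
    rw [integral_sub hInta hIntb] at hdiff
    linarith
  -- rewrite the integrals of the divided functions
  rw [integral_div, integral_div, ← hEa, ← hEb] at hlt
  have hEapos : 0 < Ea := by
    have h := RG_pos a
    rw [RG_eq_mul, ← hEa] at h
    by_contra hc
    push_neg at hc
    nlinarith [phiG_pos a]
  have hEbpos : 0 < Eb := by
    have h := RG_pos b
    rw [RG_eq_mul, ← hEb] at h
    by_contra hc
    push_neg at hc
    nlinarith [phiG_pos b]
  have hra : a * phiG a / RG a = a / Ea := by
    rw [RG_eq_mul, ← hEa, mul_comm a (phiG a)]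
    exact mul_div_mul_left a Ea (phiG_pos a).ne'
  have hrb : b * phiG b / RG b = b / Eb := by
    rw [RG_eq_mul, ← hEb, mul_comm b (phiG b)]
    exact mul_div_mul_left b Eb (phiG_pos b).ne'
  have h' : (Ea / a)⁻¹ < (Eb / b)⁻¹ := inv_strictAnti₀ (div_pos hEbpos hb) hlt
  rw [inv_div, inv_div] at h'
  rw [hra, hrb]
  exact h'

lemma den_eq {t : ℝ} (ht : 0 < t) (y : ℝ) :
    (∫ z in Set.Ici y, (Real.sqrt (2 * Real.pi * t))⁻¹ * Real.exp (-z ^ 2 / (2 * t)))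
      = RG (y / Real.sqrt t) := by
  have hst : 0 < Real.sqrt t := Real.sqrt_pos.mpr ht
  have hrw : ∀ z : ℝ, (Real.sqrt (2 * Real.pi * t))⁻¹ * Real.exp (-z ^ 2 / (2 * t))
      = (Real.sqrt t)⁻¹ * phiG ((Real.sqrt t)⁻¹ * z) := by
    intro z
    unfold phiG
    rw [show 2 * Real.pi * t = (2 * Real.pi) * t by ring,
      Real.sqrt_mul (by positivity), mul_inv]
    have hsq : ((Real.sqrt t)⁻¹ * z) ^ 2 = z ^ 2 / t := by
      rw [mul_pow, inv_pow, Real.sq_sqrt ht.le]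
      ring
    have harg : -z ^ 2 / (2 * t) = -((Real.sqrt t)⁻¹ * z) ^ 2 / 2 := by
      rw [hsq]; ring
    rw [harg]; ring
  simp only [hrw]
  rw [integral_Ici_eq_integral_Ioi, integral_const_mul,
    MeasureTheory.integral_comp_mul_left_Ioi phiG y (inv_pos.mpr hst)]
  rw [RG, integral_Ici_eq_integral_Ioi]
  rw [smul_eq_mul, inv_inv, div_eq_inv_mul]
  rw [← mul_assoc, inv_mul_cancel₀ hst.ne', one_mul]

lemma integrand_eq {t : ℝ} (ht : 0 < t) (y : ℝ) :
    y * ((Real.sqrt (2 * Real.pi * t))⁻¹ * Real.exp (-y ^ 2 / (2 * t))) /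
        (∫ z in Set.Ici y, (Real.sqrt (2 * Real.pi * t))⁻¹ * Real.exp (-z ^ 2 / (2 * t)))
      = (y / Real.sqrt t) * phiG (y / Real.sqrt t) / RG (y / Real.sqrt t) := by
  have hst : 0 < Real.sqrt t := Real.sqrt_pos.mpr ht
  rw [den_eq ht y]
  congr 1
  have hrw : (Real.sqrt (2 * Real.pi * t))⁻¹ * Real.exp (-y ^ 2 / (2 * t))
      = (Real.sqrt t)⁻¹ * phiG ((Real.sqrt t)⁻¹ * y) := by
    unfold phiG
    rw [show 2 * Real.pi * t = (2 * Real.pi) * t by ring,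
      Real.sqrt_mul (by positivity), mul_inv]
    have hsq : ((Real.sqrt t)⁻¹ * y) ^ 2 = y ^ 2 / t := by
      rw [mul_pow, inv_pow, Real.sq_sqrt ht.le]
      ring
    have harg : -y ^ 2 / (2 * t) = -((Real.sqrt t)⁻¹ * y) ^ 2 / 2 := by
      rw [hsq]; ring
    rw [harg]; ring
  rw [hrw, div_eq_inv_mul, show (Real.sqrt t)⁻¹ * y = y / Real.sqrt t by rw [div_eq_inv_mul]]
  ring

lemma RG_eq_sub (u : ℝ) : RG u = RG 0 - ∫ s in (0:ℝ)..u, phiG s := by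
  have h := intervalIntegral.integral_Iic_sub_Iic
    (integrable_phiG.integrableOn (s := Set.Iic (0:ℝ))) (integrable_phiG.integrableOn (s := Set.Iic u))
  have h0 : ∀ v : ℝ, (∫ s in Set.Iic v, phiG s) + RG v = ∫ s, phiG s := by
    intro v
    rw [RG, integral_Ici_eq_integral_Ioi]
    exact intervalIntegral.integral_Iic_add_Ioi integrable_phiG.integrableOn integrable_phiG.integrableOn
  have hu := h0 u
  have hz := h0 0
  linarith [h]

lemma continuous_RG : Continuous RG := by
  have h1 : Continuous fun u : ℝ => ∫ s in (0:ℝ)..u, phiG s :=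
    integrable_phiG.continuous_primitive 0
  have : RG = fun u => RG 0 - ∫ s in (0:ℝ)..u, phiG s := funext RG_eq_sub
  rw [this]
  exact continuous_const.sub h1

lemma continuous_F : Continuous (fun u : ℝ => u * phiG u / RG u) :=
  (continuous_id.mul continuous_phiG).div continuous_RG fun u => (RG_pos u).ne'

/-- For the Gaussian peacock, the Vallois embedding function
`ψ_t(x) = ∫₀^x y μ_t(y)/R_t(y) dy` is strictly decreasing in `t` for each fixed `x > 0`. -/
theorem stmt11 (x : ℝ) (hx : 0 < x) :
    StrictAntiOn
      (fun t : ℝ =>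
        ∫ y in (0:ℝ)..x,
          y * ((Real.sqrt (2 * Real.pi * t))⁻¹ * Real.exp (-y ^ 2 / (2 * t))) /
            (∫ z in Set.Ici y, (Real.sqrt (2 * Real.pi * t))⁻¹ * Real.exp (-z ^ 2 / (2 * t))))
      (Set.Ioi 0) := by
  intro t1 ht1 t2 ht2 h12
  simp only [Set.mem_Ioi] at ht1 ht2
  have hs1 : 0 < Real.sqrt t1 := Real.sqrt_pos.mpr ht1
  have hs2 : 0 < Real.sqrt t2 := Real.sqrt_pos.mpr ht2
  have hss : Real.sqrt t1 < Real.sqrt t2 := Real.sqrt_lt_sqrt ht1.le h12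
  have e1 : (∫ y in (0:ℝ)..x,
      y * ((Real.sqrt (2 * Real.pi * t1))⁻¹ * Real.exp (-y ^ 2 / (2 * t1))) /
        (∫ z in Set.Ici y, (Real.sqrt (2 * Real.pi * t1))⁻¹ * Real.exp (-z ^ 2 / (2 * t1))))
      = ∫ y in (0:ℝ)..x, (y / Real.sqrt t1) * phiG (y / Real.sqrt t1) / RG (y / Real.sqrt t1) :=
    intervalIntegral.integral_congr fun y _ => integrand_eq ht1 y
  have e2 : (∫ y in (0:ℝ)..x,
      y * ((Real.sqrt (2 * Real.pi * t2))⁻¹ * Real.exp (-y ^ 2 / (2 * t2))) /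
        (∫ z in Set.Ici y, (Real.sqrt (2 * Real.pi * t2))⁻¹ * Real.exp (-z ^ 2 / (2 * t2))))
      = ∫ y in (0:ℝ)..x, (y / Real.sqrt t2) * phiG (y / Real.sqrt t2) / RG (y / Real.sqrt t2) :=
    intervalIntegral.integral_congr fun y _ => integrand_eq ht2 y
  simp only
  rw [e1, e2]
  have hc1 : Continuous fun y : ℝ =>
      (y / Real.sqrt t1) * phiG (y / Real.sqrt t1) / RG (y / Real.sqrt t1) :=
    continuous_F.comp (continuous_id.div_const _)
  have hc2 : Continuous fun y : ℝ =>
      (y / Real.sqrt t2) * phiG (y / Real.sqrt t2) / RG (y / Real.sqrt t2) :=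
    continuous_F.comp (continuous_id.div_const _)
  have hi1 : IntervalIntegrable (fun y : ℝ =>
      (y / Real.sqrt t1) * phiG (y / Real.sqrt t1) / RG (y / Real.sqrt t1)) volume 0 x :=
    hc1.intervalIntegrable 0 x
  have hi2 : IntervalIntegrable (fun y : ℝ =>
      (y / Real.sqrt t2) * phiG (y / Real.sqrt t2) / RG (y / Real.sqrt t2)) volume 0 x :=
    hc2.intervalIntegrable 0 x
  have hpos : 0 < ∫ y in (0:ℝ)..x,
      ((y / Real.sqrt t1) * phiG (y / Real.sqrt t1) / RG (y / Real.sqrt t1)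
        - (y / Real.sqrt t2) * phiG (y / Real.sqrt t2) / RG (y / Real.sqrt t2)) := by
    refine intervalIntegral.intervalIntegral_pos_of_pos_on (hi1.sub hi2) (fun y hy => ?_) hx
    refine sub_pos.mpr (F_strict ?_ ?_)
    · exact div_pos hy.1 hs2
    · exact div_lt_div_of_pos_left hy.1 hs1 hss
  rw [intervalIntegral.integral_sub hi1 hi2] at hpos
  linarith
end

section
/- Let c : ℝ → ℝ be convex, nonincreasing, with c(K) → 0 as K → ∞ and c(K) + K bounded as K → −∞, and let μ be a probability measure on ℝ with finite first moment such that c(K) = ∫ (x − K)⁺ dμ(x) for all K ∈ ℝ. Then for every K ∈ ℝ, μ((K,∞)) = −c'(K+), where c'(K+) denotes the right derivative of c at K. -/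
/-! Each difference quotient of `K ↦ (x - K)⁺` is bounded by `1` (the map is 1-Lipschitz) and is eventually
equal to `-1_{x > K}` as `K' ↓ K`, so dominated convergence identifies the right derivative of the
call price `K ↦ ∫ (x - K)⁺ dμ` with `-μ (K, ∞)`. -/

open MeasureTheory Set Filter Topology

lemma abs_slope_max_sub_le_one (x K t : ℝ) :
    |slope (fun t => max (x - t) 0) K t| ≤ 1 := by
  rcases eq_or_ne t K with rfl | htK
  · simp
  rw [slope_def_field, abs_div, div_le_one (abs_pos.mpr (sub_ne_zero.mpr htK))]
  calc |max (x - t) 0 - max (x - K) 0| ≤ |(x - t) - (x - K)| := abs_max_sub_max_le_abs _ _ _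
    _ = |t - K| := by rw [abs_sub_comm]; ring_nf

lemma slope_max_sub_eventuallyEq (x K : ℝ) :
    (fun t => slope (fun t => max (x - t) 0) K t) =ᶠ[𝓝[>] K]
      fun _ => -(Ioi K).indicator 1 x := by
  rcases le_or_gt x K with hx | hx
  · filter_upwards [self_mem_nhdsWithin] with t (ht : K < t)
    simp [slope_def_field, hx, hx.trans ht.le, not_lt.mpr hx]
  · filter_upwards [Ioo_mem_nhdsGT hx] with t ⟨hKt, htx⟩
    rw [slope_def_field, max_eq_left (by linarith), max_eq_left (by linarith),
      indicator_of_mem (show x ∈ Ioi K from hx), Pi.one_apply]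
    field_simp [(sub_pos.mpr hKt).ne']
    ring

lemma integrable_max_sub_zero {μ : Measure ℝ} [IsFiniteMeasure μ]
    (hmom : Integrable (fun x : ℝ => x) μ) (K : ℝ) :
    Integrable (fun x => max (x - K) 0) μ :=
  (hmom.sub (integrable_const K)).pos_part

theorem hasDerivWithinAt_integral_max_sub_zero {μ : Measure ℝ} [IsFiniteMeasure μ]
    (hmom : Integrable (fun x : ℝ => x) μ) (K : ℝ) :
    HasDerivWithinAt (fun K => ∫ x, max (x - K) 0 ∂μ) (-μ.real (Ioi K)) (Ioi K) K := by
  rw [hasDerivWithinAt_iff_tendsto_slope, sdiff_singleton_eq_self self_notMem_Ioi]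
  have hslope : slope (fun K => ∫ x, max (x - K) 0 ∂μ) K =
      fun t => ∫ x, slope (fun t => max (x - t) 0) K t ∂μ := funext fun t => by
    simp only [slope, vsub_eq_sub, integral_smul,
      integral_sub (integrable_max_sub_zero hmom t) (integrable_max_sub_zero hmom K)]
  rw [hslope, ← integral_indicator_one (μ := μ) measurableSet_Ioi, ← integral_neg]
  refine tendsto_integral_filter_of_dominated_convergence (fun _ => 1) ?_ ?_
    (integrable_const 1) (ae_of_all _ fun x => ?_)
  · refine .of_forall fun t => Continuous.aestronglyMeasurable ?_
    simp only [slope_def_field]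
    fun_prop
  · exact .of_forall fun t => ae_of_all _ fun x => abs_slope_max_sub_le_one x K t
  · exact tendsto_const_nhds.congr' (slope_max_sub_eventuallyEq x K).symm

theorem stmt17_general (c : ℝ → ℝ)
    (μ : Measure ℝ) [IsProbabilityMeasure μ]
    (hmom : Integrable (fun x : ℝ => x) μ)
    (hc : ∀ K : ℝ, c K = ∫ x, max (x - K) 0 ∂μ)
    (K d : ℝ) (hd : HasDerivWithinAt c d (Set.Ioi K) K) :
    (μ (Set.Ioi K)).toReal = -d := by
  obtain rfl : c = fun K => ∫ x, max (x - K) 0 ∂μ := funext hc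
  rw [(uniqueDiffWithinAt_Ioi K).eq_deriv _ hd (hasDerivWithinAt_integral_max_sub_zero hmom K),
    neg_neg, measureReal_def]

/-- Breeden–Litzenberger: if `c(K) = ∫ (x − K)⁺ dμ`, then
`μ((K,∞)) = −c'(K+)`. -/
theorem stmt17 (c : ℝ → ℝ)
    (hconv : ConvexOn ℝ Set.univ c)
    (hanti : Antitone c)
    (hlim : Tendsto c atTop (nhds 0))
    (hbdd : ∃ C : ℝ, ∀ K : ℝ, K ≤ 0 → |c K + K| ≤ C)
    (μ : Measure ℝ) [IsProbabilityMeasure μ]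
    (hmom : Integrable (fun x : ℝ => x) μ)
    (hc : ∀ K : ℝ, c K = ∫ x, max (x - K) 0 ∂μ)
    (K d : ℝ) (hd : HasDerivWithinAt c d (Set.Ioi K) K) :
    (μ (Set.Ioi K)).toReal = -d :=
  stmt17_general c μ hmom hc K d hd
end
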